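/- arXiv:1305.6539 — 2 statements merged into one kernel-verified Lean document; each statement's English description precedes it below -/
import Mathlib

section
/- In the setting of the obstruction class: the homomorphism ρ₀ : G → GL_n(R₀) admits a lift to a group homomorphism ρ₁ : G → GL_n(R₁) if and only if the obstruction class [c] ∈ H²(G, Mat_n(k) ⊗_k I) vanishes. -/
/-- The (additively written) obstruction 2-cocycle `c(g₁,g₂) - 1` attached to a set-theoretic
lift `γ`, where `c(g₁,g₂) = γ(g₁g₂)γ(g₂)⁻¹γ(g₁)⁻¹`. -/
def cocycleOf {R₁ : Type} [CommRing R₁] {G : Type} [Group G] {n : ℕ}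
    (γ : G → GL (Fin n) R₁) (g₁ g₂ : G) : Matrix (Fin n) (Fin n) R₁ :=
  ((γ (g₁ * g₂) * (γ g₂)⁻¹ * (γ g₁)⁻¹ : GL (Fin n) R₁) : Matrix (Fin n) (Fin n) R₁) - 1

set_option linter.unusedSectionVars false

section Aux

variable {R₁ R₀ : Type} [CommRing R₁] [CommRing R₀] [IsLocalRing R₀] [IsLocalRing R₁]
  (π : R₁ →+* R₀) {n : ℕ}

lemma ker_mul_ker
    (hsq : ∀ x ∈ RingHom.ker π, ∀ y ∈ IsLocalRing.maximalIdeal R₁, x * y = 0)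
    {x y : R₁} (h1 : x ∈ RingHom.ker π) (h2 : y ∈ RingHom.ker π) : x * y = 0 := by
  refine hsq x h1 y ?_
  rw [IsLocalRing.mem_maximalIdeal]
  intro hy
  have : IsUnit (π y) := hy.map π
  rw [RingHom.mem_ker.mp h2] at this
  exact not_isUnit_zero this

lemma matKer_mul_matKer
    (hsq : ∀ x ∈ RingHom.ker π, ∀ y ∈ IsLocalRing.maximalIdeal R₁, x * y = 0)
    {A B : Matrix (Fin n) (Fin n) R₁}
    (hA : ∀ i j, A i j ∈ RingHom.ker π) (hB : ∀ i j, B i j ∈ RingHom.ker π) :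
    A * B = 0 := by
  ext i j
  rw [Matrix.mul_apply]
  simp only [Matrix.zero_apply]
  exact Finset.sum_eq_zero fun k _ => ker_mul_ker π hsq (hA i k) (hB k j)

lemma matKer_mul_left {A B : Matrix (Fin n) (Fin n) R₁}
    (hB : ∀ i j, B i j ∈ RingHom.ker π) (i j : Fin n) : (A * B) i j ∈ RingHom.ker π := by
  rw [Matrix.mul_apply]
  exact Ideal.sum_mem _ fun k _ => Ideal.mul_mem_left _ _ (hB k j)

lemma matKer_mul_right {A B : Matrix (Fin n) (Fin n) R₁}
    (hA : ∀ i j, A i j ∈ RingHom.ker π) (i j : Fin n) : (A * B) i j ∈ RingHom.ker π := by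
  rw [Matrix.mul_apply]
  exact Ideal.sum_mem _ fun k _ => Ideal.mul_mem_right _ _ (hA i k)

variable {G : Type} [Group G]

lemma cocycle_mem (ρ₀ : G →* GL (Fin n) R₀) (γ : G → GL (Fin n) R₁)
    (hγ : ∀ g : G, Matrix.GeneralLinearGroup.map π (γ g) = ρ₀ g) (g₁ g₂ : G) :
    ∀ i j, cocycleOf γ g₁ g₂ i j ∈ RingHom.ker π := by
  intro i j
  have h : Matrix.GeneralLinearGroup.map π (γ (g₁ * g₂) * (γ g₂)⁻¹ * (γ g₁)⁻¹) = 1 := by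
    rw [map_mul, map_mul, map_inv, map_inv, hγ, hγ, hγ, map_mul ρ₀, mul_inv_cancel_right,
      mul_inv_cancel]
  have h2 := Matrix.GeneralLinearGroup.map_apply π i j (γ (g₁ * g₂) * (γ g₂)⁻¹ * (γ g₁)⁻¹)
  rw [h] at h2
  rw [RingHom.mem_ker, cocycleOf, Matrix.sub_apply, map_sub, ← h2]
  simp [Matrix.one_apply, apply_ite π]

/-- The key identity. -/
lemma key_iff
    (hsq : ∀ x ∈ RingHom.ker π, ∀ y ∈ IsLocalRing.maximalIdeal R₁, x * y = 0)
    (γ : G → GL (Fin n) R₁) (g₁ g₂ : G)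
    (hc : ∀ i j, cocycleOf γ g₁ g₂ i j ∈ RingHom.ker π)
    {b₁ b₂ b₁₂ : Matrix (Fin n) (Fin n) R₁}
    (h1 : ∀ i j, b₁ i j ∈ RingHom.ker π) (h2 : ∀ i j, b₂ i j ∈ RingHom.ker π)
    (h12 : ∀ i j, b₁₂ i j ∈ RingHom.ker π) :
    ((1 + b₁₂) * (γ (g₁ * g₂) : Matrix (Fin n) (Fin n) R₁) =
        (1 + b₁) * (γ g₁ : Matrix (Fin n) (Fin n) R₁) *
          ((1 + b₂) * (γ g₂ : Matrix (Fin n) (Fin n) R₁))) ↔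
      cocycleOf γ g₁ g₂ =
        (γ g₁ : Matrix (Fin n) (Fin n) R₁) * b₂ *
            (((γ g₁)⁻¹ : GL (Fin n) R₁) : Matrix (Fin n) (Fin n) R₁)
          - b₁₂ + b₁ := by
  set c : Matrix (Fin n) (Fin n) R₁ := cocycleOf γ g₁ g₂ with hc_def
  set A₁ : Matrix (Fin n) (Fin n) R₁ := (γ g₁ : Matrix (Fin n) (Fin n) R₁) with hA₁
  set A₂ : Matrix (Fin n) (Fin n) R₁ := (γ g₂ : Matrix (Fin n) (Fin n) R₁) with hA₂
  set Ad : Matrix (Fin n) (Fin n) R₁ :=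
    A₁ * b₂ * (((γ g₁)⁻¹ : GL (Fin n) R₁) : Matrix (Fin n) (Fin n) R₁) with hAd
  have hAdmem : ∀ i j, Ad i j ∈ RingHom.ker π := fun i j =>
    matKer_mul_right π (matKer_mul_left π h2) i j
  -- γ(g₁g₂) = (1 + c) * (A₁ * A₂)
  have hfact : (γ (g₁ * g₂) : Matrix (Fin n) (Fin n) R₁) = (1 + c) * (A₁ * A₂) := by
    have : (1 + c : Matrix (Fin n) (Fin n) R₁) =
        ((γ (g₁ * g₂) * (γ g₂)⁻¹ * (γ g₁)⁻¹ : GL (Fin n) R₁) : Matrix (Fin n) (Fin n) R₁) := by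
      rw [hc_def, cocycleOf]; abel
    rw [this, hA₁, hA₂, ← Units.val_mul, ← Units.val_mul]
    congr 1
    group
  -- LHS rewrite
  have hL : (1 + b₁₂) * (γ (g₁ * g₂) : Matrix (Fin n) (Fin n) R₁) =
      (1 + (c + b₁₂)) * (A₁ * A₂) := by
    rw [hfact, ← mul_assoc]
    congr 1
    have hz : b₁₂ * c = 0 := matKer_mul_matKer π hsq h12 hc
    rw [add_mul, mul_add, mul_add, one_mul, one_mul, mul_one, hz, add_zero]
    abel
  -- RHS rewrite
  have hR : (1 + b₁) * A₁ * ((1 + b₂) * A₂) = (1 + (Ad + b₁)) * (A₁ * A₂) := by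
    have hAdA : Ad * A₁ = A₁ * b₂ := by
      rw [hAd, mul_assoc, hA₁, ← Units.val_mul, inv_mul_cancel, Units.val_one, mul_one]
    have hz : b₁ * Ad = 0 := matKer_mul_matKer π hsq h1 hAdmem
    calc (1 + b₁) * A₁ * ((1 + b₂) * A₂)
        = ((1 + b₁) * (A₁ + A₁ * b₂)) * A₂ := by noncomm_ring
      _ = ((1 + b₁) * ((1 + Ad) * A₁)) * A₂ := by
          have h' : (1 + Ad) * A₁ = A₁ + A₁ * b₂ := by rw [add_mul, one_mul, hAdA]
          rw [h']
      _ = ((1 + b₁) * (1 + Ad)) * (A₁ * A₂) := by noncomm_ring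
      _ = (1 + (Ad + b₁)) * (A₁ * A₂) := by
          rw [add_mul, mul_add, mul_add, one_mul, one_mul, mul_one, hz, add_zero]; abel
  rw [hL, hR]
  constructor
  · intro h
    have hcancel : (1 + (c + b₁₂)) = (1 + (Ad + b₁)) := by
      have hu : IsUnit (A₁ * A₂) := by
        rw [hA₁, hA₂, ← Units.val_mul]; exact Units.isUnit _
      exact hu.mul_right_cancel h
    have := add_left_cancel hcancel
    have h3 : c = Ad + b₁ - b₁₂ := eq_sub_of_add_eq this
    rw [h3]; abel
  · intro h
    have : c + b₁₂ = Ad + b₁ := by rw [h]; abel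
    rw [this]



lemma entry_mem (u : GL (Fin n) R₁) (hu : Matrix.GeneralLinearGroup.map π u = 1) :
    ∀ i j, (((u : Matrix (Fin n) (Fin n) R₁) - 1) i j) ∈ RingHom.ker π := by
  intro i j
  have h2 := Matrix.GeneralLinearGroup.map_apply π i j u
  rw [hu] at h2
  rw [RingHom.mem_ker, Matrix.sub_apply, map_sub, ← h2]
  simp [Matrix.one_apply, apply_ite π]

end Aux


/-- The homomorphism `ρ₀ : G → GL_n(R₀)` lifts to a group homomorphism
`ρ₁ : G → GL_n(R₁)` if and only if the obstruction class vanishes, i.e. if and only if the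
obstruction 2-cocycle of a set-theoretic lift `γ` is a 2-coboundary. -/
theorem lifts_iff_obstruction_vanishes
    (R₁ R₀ : Type) [CommRing R₁] [CommRing R₀] [IsLocalRing R₁] [IsLocalRing R₀]
    (π : R₁ →+* R₀) (hsurj : Function.Surjective π) (hloc : IsLocalHom π)
    (hsq : ∀ x ∈ RingHom.ker π, ∀ y ∈ IsLocalRing.maximalIdeal R₁, x * y = 0)
    (G : Type) [Group G] (n : ℕ)
    (ρ₀ : G →* GL (Fin n) R₀) (γ : G → GL (Fin n) R₁)
    (hγ : ∀ g : G, Matrix.GeneralLinearGroup.map π (γ g) = ρ₀ g) :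
    (∃ ρ₁ : G →* GL (Fin n) R₁,
        ∀ g : G, Matrix.GeneralLinearGroup.map π (ρ₁ g) = ρ₀ g) ↔
    ∃ b : G → Matrix (Fin n) (Fin n) R₁,
      (∀ g : G, ∀ i j : Fin n, b g i j ∈ RingHom.ker π) ∧
      ∀ g₁ g₂ : G,
        cocycleOf γ g₁ g₂ =
          (γ g₁ : Matrix (Fin n) (Fin n) R₁) * b g₂ *
              (((γ g₁)⁻¹ : GL (Fin n) R₁) : Matrix (Fin n) (Fin n) R₁)
            - b (g₁ * g₂) + b g₁ := by
  have hcmem := cocycle_mem π ρ₀ γ hγ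
  constructor
  · rintro ⟨ρ₁, hlift⟩
    refine ⟨fun g => ((ρ₁ g * (γ g)⁻¹ : GL (Fin n) R₁) : Matrix (Fin n) (Fin n) R₁) - 1,
      fun g => entry_mem π _ (by rw [map_mul, map_inv, hlift, hγ, mul_inv_cancel]), ?_⟩
    intro g₁ g₂
    refine (key_iff π hsq γ g₁ g₂ (hcmem g₁ g₂)
      (entry_mem π _ (by rw [map_mul, map_inv, hlift, hγ, mul_inv_cancel]))
      (entry_mem π _ (by rw [map_mul, map_inv, hlift, hγ, mul_inv_cancel]))
      (entry_mem π _ (by rw [map_mul, map_inv, hlift, hγ, mul_inv_cancel]))).mp ?_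
    have key : ∀ g : G, (1 + (((ρ₁ g * (γ g)⁻¹ : GL (Fin n) R₁) : Matrix (Fin n) (Fin n) R₁) - 1))
        * (γ g : Matrix (Fin n) (Fin n) R₁) = ((ρ₁ g : GL (Fin n) R₁) : Matrix (Fin n) (Fin n) R₁) := by
      intro g
      have h1 : (1 + (((ρ₁ g * (γ g)⁻¹ : GL (Fin n) R₁) : Matrix (Fin n) (Fin n) R₁) - 1))
          = ((ρ₁ g * (γ g)⁻¹ : GL (Fin n) R₁) : Matrix (Fin n) (Fin n) R₁) := by abel
      rw [h1, ← Units.val_mul, inv_mul_cancel_right]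
    rw [key, key, key, ← Units.val_mul, ← map_mul]
  · rintro ⟨b, hmem, hrel⟩
    have hbb : ∀ g : G, b g * b g = 0 := fun g => matKer_mul_matKer π hsq (hmem g) (hmem g)
    have hval : ∀ g : G, (1 - b g) * (1 + b g) = 1 := by
      intro g
      rw [sub_mul, mul_add, mul_add, one_mul, one_mul, mul_one, hbb, add_zero]
      abel
    have hval' : ∀ g : G, (1 + b g) * (1 - b g) = 1 := by
      intro g
      rw [add_mul, mul_sub, mul_sub, one_mul, one_mul, mul_one, hbb, sub_zero]
      abel
    let u : G → GL (Fin n) R₁ := fun g =>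
      { val := (1 + b g) * (γ g : Matrix (Fin n) (Fin n) R₁)
        inv := (((γ g)⁻¹ : GL (Fin n) R₁) : Matrix (Fin n) (Fin n) R₁) * (1 - b g)
        val_inv := by
          rw [mul_assoc, ← mul_assoc (γ g : Matrix (Fin n) (Fin n) R₁), ← Units.val_mul,
            mul_inv_cancel, Units.val_one, one_mul, hval']
        inv_val := by
          rw [mul_assoc, ← mul_assoc (1 - b g), hval, one_mul, ← Units.val_mul,
            inv_mul_cancel, Units.val_one] }
    refine ⟨MonoidHom.mk' u ?_, ?_⟩
    · intro g₁ g₂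
      apply Units.ext
      show (1 + b (g₁ * g₂)) * (γ (g₁ * g₂) : Matrix (Fin n) (Fin n) R₁) =
        (1 + b g₁) * (γ g₁ : Matrix (Fin n) (Fin n) R₁) *
          ((1 + b g₂) * (γ g₂ : Matrix (Fin n) (Fin n) R₁))
      exact (key_iff π hsq γ g₁ g₂ (hcmem g₁ g₂) (hmem g₁) (hmem g₂)
        (hmem (g₁ * g₂))).mpr (hrel g₁ g₂)
    · intro g
      apply Units.ext
      have h0 : (b g).map π = 0 := by
        ext i j
        simpa [Matrix.map_apply] using RingHom.mem_ker.mp (hmem g i j)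
      calc ((Matrix.GeneralLinearGroup.map π (u g) : GL (Fin n) R₀) : Matrix (Fin n) (Fin n) R₀)
          = ((1 + b g) * (γ g : Matrix (Fin n) (Fin n) R₁)).map π := rfl
        _ = ((1 : Matrix (Fin n) (Fin n) R₁).map π + (b g).map π) * ((γ g : Matrix (Fin n) (Fin n) R₁)).map π := by
            rw [Matrix.map_mul, Matrix.map_add _ (map_add π)]
        _ = ((ρ₀ g : GL (Fin n) R₀) : Matrix (Fin n) (Fin n) R₀) := by
            rw [h0, add_zero, Matrix.map_one π (map_zero π) (map_one π), one_mul]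
            have := congrArg Units.val (hγ g)
            exact this
end

section
/- Let k be a field of characteristic p > 0, G a finite group, and V a finite-dimensional kG-module with End_{kG}(V)/PEnd_{kG}(V) ≅ k. Then V has a unique (up to isomorphism) non-projective indecomposable direct summand V₀, and V ≅ V₀ ⊕ Q for some projective kG-module Q. -/
/-- An endomorphism of a module over a ring `A` factors through a projective `A`-module. -/
def FactorsThroughProjective (A : Type) [Ring A] {M : Type} [AddCommGroup M] [Module A M]
    (f : M →ₗ[A] M) : Prop :=
  ∃ (P : Type) (_ : AddCommGroup P) (_ : Module A P),
    Module.Projective A P ∧ ∃ (α : M →ₗ[A] P) (β : P →ₗ[A] M), f = β.comp α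

/-- The stable endomorphism ring `End_A(M)/PEnd_A(M)` is isomorphic to `k`. -/
def StableEndTrivial (k : Type) [Field k] (A : Type) [Ring A] (M : Type) [AddCommGroup M]
    [Module k M] [Module A M] [SMulCommClass A k M] : Prop :=
  (¬ FactorsThroughProjective A (LinearMap.id : M →ₗ[A] M)) ∧
  ∀ f : M →ₗ[A] M, ∃ a : k, FactorsThroughProjective A (f - a • LinearMap.id)

/-- An `A`-module is indecomposable if it is nonzero and not the direct sum of two nonzero
submodules. -/
def IndecomposableModule (A M : Type) [Ring A] [AddCommGroup M] [Module A M] : Prop :=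
  Nontrivial M ∧ ∀ X Y : Submodule A M, IsCompl X Y → X = ⊥ ∨ Y = ⊥

/-!
Choose a direct summand `X` of `V` that is minimal among the non-projective ones; it exists since
`V` has finite length and `V` itself is not projective. Write `V = X ⊕ Y` and let `e` be the
projection onto `X`. Stably `e` is a scalar `a`, so `(1 - a) • e = e (e - a)` and
`-a • (1 - e) = (1 - e) (e - a)` factor through projectives; one of the two scalars is nonzero,
so `e` or `1 - e` factors through a projective, i.e. `X` or `Y` is projective, and it must be `Y`.
Minimality makes `X` indecomposable.

For uniqueness, let `X ⊕ Y ≅ W ⊕ Q` with `Q` projective and `W` indecomposable. The composite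
`X → W → X` differs from the identity by a map through `Q`, and so do all its powers; none of them
vanishes, as `X` is not projective. By Fitting's lemma it is an automorphism, and then `X` is a
summand of the indecomposable `W`.
-/

section FactorsThroughProjective

variable {A : Type} [Ring A] {M N : Type} [AddCommGroup M] [Module A M] [AddCommGroup N]
  [Module A N]

theorem factorsThroughProjective_id_iff :
    FactorsThroughProjective A (LinearMap.id : M →ₗ[A] M) ↔ Module.Projective A M := by
  refine ⟨fun ⟨P, _, _, _, α, β, h⟩ ↦ Module.Projective.of_split α β h.symm, fun h ↦ ?_⟩
  exact ⟨M, _, _, h, LinearMap.id, LinearMap.id, rfl⟩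

namespace FactorsThroughProjective

theorem zero : FactorsThroughProjective A (0 : M →ₗ[A] M) :=
  ⟨A, _, _, inferInstance, 0, 0, rfl⟩

theorem comp_comp {f : M →ₗ[A] M} (hf : FactorsThroughProjective A f) (u : M →ₗ[A] N)
    (v : N →ₗ[A] M) : FactorsThroughProjective A (u ∘ₗ f ∘ₗ v) := by
  obtain ⟨P, _, _, hP, α, β, rfl⟩ := hf
  exact ⟨P, _, _, hP, α ∘ₗ v, u ∘ₗ β, rfl⟩

theorem comp_left {f : M →ₗ[A] M} (hf : FactorsThroughProjective A f) (g : M →ₗ[A] M) :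
    FactorsThroughProjective A (g ∘ₗ f) :=
  hf.comp_comp g LinearMap.id

theorem comp_right {f : M →ₗ[A] M} (hf : FactorsThroughProjective A f) (g : M →ₗ[A] M) :
    FactorsThroughProjective A (f ∘ₗ g) :=
  hf.comp_comp LinearMap.id g

theorem add {f g : M →ₗ[A] M} (hf : FactorsThroughProjective A f)
    (hg : FactorsThroughProjective A g) : FactorsThroughProjective A (f + g) := by
  obtain ⟨P, _, _, hP, α, β, rfl⟩ := hf
  obtain ⟨P', _, _, hP', α', β', rfl⟩ := hg
  refine ⟨P × P', _, _, inferInstance, α.prod α', β.coprod β', ?_⟩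
  ext x
  simp

theorem smul {k : Type} [Semiring k] [Module k M] [SMulCommClass A k M] {f : M →ₗ[A] M}
    (hf : FactorsThroughProjective A f) (c : k) : FactorsThroughProjective A (c • f) := by
  obtain ⟨P, _, _, hP, α, β, rfl⟩ := hf
  exact ⟨P, _, _, hP, α, c • β, (LinearMap.smul_comp c β α).symm⟩

theorem neg {f : M →ₗ[A] M} (hf : FactorsThroughProjective A f) :
    FactorsThroughProjective A (-f) := by
  simpa using hf.smul (-1 : ℤ)

theorem pow_sub_id {g : M →ₗ[A] M} (hg : FactorsThroughProjective A (g - LinearMap.id))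
    (n : ℕ) : FactorsThroughProjective A (g ^ n - LinearMap.id) := by
  induction n with
  | zero => rw [pow_zero, Module.End.one_eq_id, sub_self]; exact zero
  | succ n ih =>
    have hsplit :
        g ^ (n + 1) - LinearMap.id = (g ^ n - LinearMap.id) ∘ₗ g + (g - LinearMap.id) := by
      ext x
      simp [pow_succ]
    exact hsplit ▸ (ih.comp_right g).add hg

theorem of_smul {k : Type} [Field k] [Module k M] [SMulCommClass A k M] {c : k} {f : M →ₗ[A] M}
    (hc : c ≠ 0) (h : FactorsThroughProjective A (c • f)) : FactorsThroughProjective A f := by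
  simpa [smul_smul, inv_mul_cancel₀ hc] using h.smul c⁻¹

end FactorsThroughProjective

theorem Submodule.projective_of_factorsThroughProjective_projection {X Y : Submodule A M}
    (hXY : IsCompl X Y) (h : FactorsThroughProjective A (X.projection Y hXY)) :
    Module.Projective A X := by
  have hid : X.projectionOnto Y hXY ∘ₗ X.projection Y hXY ∘ₗ X.subtype = LinearMap.id := by
    ext x
    simp
  exact factorsThroughProjective_id_iff.mp (hid ▸ h.comp_comp _ _)

end FactorsThroughProjective

section Indecomposable

variable {A : Type} [Ring A] {M : Type} [AddCommGroup M] [Module A M]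

theorem IndecomposableModule.bijective_or_isNilpotent [IsNoetherian A M] [IsArtinian A M]
    (hM : IndecomposableModule A M) (f : M →ₗ[A] M) :
    Function.Bijective f ∨ IsNilpotent f := by
  obtain ⟨n, hn⟩ := Filter.eventually_atTop.mp f.eventually_isCompl_ker_pow_range_pow
  rcases hM.2 _ _ (hn (n + 1) n.le_succ) with hker | hrange
  · have hinj : Function.Injective (f ^ n * f) := by
      rw [← pow_succ]
      exact LinearMap.ker_eq_bot.mp hker
    left
    exact IsArtinian.bijective_of_injective_endomorphism f (Function.Injective.of_comp hinj)
  · exact Or.inr ⟨n + 1, LinearMap.range_eq_bot.mp hrange⟩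

theorem IndecomposableModule.bijective_of_factorsThroughProjective_sub_id [IsNoetherian A M]
    [IsArtinian A M] (hM : IndecomposableModule A M) (hproj : ¬ Module.Projective A M)
    {g : M →ₗ[A] M} (hg : FactorsThroughProjective A (g - LinearMap.id)) :
    Function.Bijective g := by
  refine (hM.bijective_or_isNilpotent g).resolve_right fun ⟨n, hn⟩ ↦ hproj ?_
  have hneg := (hg.pow_sub_id n).neg
  rw [hn, zero_sub, neg_neg] at hneg
  exact factorsThroughProjective_id_iff.mp hneg

theorem IndecomposableModule.bijective_of_leftInverse {X : Type} [AddCommGroup X] [Module A X]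
    [Nontrivial X] (hM : IndecomposableModule A M) {φ : X →ₗ[A] M} {ρ : M →ₗ[A] X}
    (h : ρ ∘ₗ φ = LinearMap.id) : Function.Bijective φ := by
  have hleft : Function.LeftInverse ρ φ := LinearMap.congr_fun h
  have hidem : IsIdempotentElem (φ ∘ₗ ρ) := by
    ext x
    simp [hleft (ρ x)]
  have hcompl := LinearMap.IsIdempotentElem.isCompl hidem
  rw [LinearMap.range_comp_of_range_eq_top φ (LinearMap.range_eq_top.mpr hleft.surjective),
    LinearMap.ker_comp_of_ker_eq_bot ρ (LinearMap.ker_eq_bot.mpr hleft.injective)] at hcompl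
  rcases hM.2 _ _ hcompl with hrange | hker
  · obtain ⟨x, hx⟩ := exists_ne (0 : X)
    refine absurd ?_ hx
    rw [← hleft x, LinearMap.range_eq_bot.mp hrange, LinearMap.zero_apply, map_zero]
  · exact ⟨hleft.injective, LinearMap.range_eq_top.mp (eq_top_of_isCompl_bot (hker ▸ hcompl))⟩

end Indecomposable

section Summands

variable {A : Type} [Ring A] {M : Type} [AddCommGroup M] [Module A M]

def Submodule.IsNonprojectiveSummand (X : Submodule A M) : Prop :=
  (∃ Y, IsCompl X Y) ∧ ¬ Module.Projective A X

theorem Submodule.isCompl_map_subtype_sup {X Y : Submodule A M} (hXY : IsCompl X Y)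
    {B C : Submodule A X} (hBC : IsCompl B C) :
    IsCompl (B.map X.subtype) (C.map X.subtype ⊔ Y) := by
  refine (Submodule.disjoint_map X.injective_subtype hBC.disjoint)
    |>.isCompl_sup_right_of_isCompl_sup_left ?_
  rwa [← Submodule.map_sup, hBC.sup_eq_top, Submodule.map_subtype_top]

theorem Submodule.indecomposableModule_of_minimal_isNonprojectiveSummand {X : Submodule A M}
    (hX : Minimal Submodule.IsNonprojectiveSummand X) : IndecomposableModule A X := by
  obtain ⟨⟨Y, hXY⟩, hXproj⟩ := hX.prop
  have hsummand : ∀ B C : Submodule A X, IsCompl B C → ¬ Module.Projective A B → C = ⊥ := by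
    intro B C hBC hB
    have hB' : (B.map X.subtype).IsNonprojectiveSummand :=
      ⟨⟨_, Submodule.isCompl_map_subtype_sup hXY hBC⟩, fun _ ↦
        hB (Module.Projective.of_equiv (B.equivMapOfInjective _ X.injective_subtype).symm)⟩
    have htop : B.map X.subtype = (⊤ : Submodule A X).map X.subtype := by
      rw [Submodule.map_subtype_top]
      exact le_antisymm (X.map_subtype_le B) (hX.2 hB' (X.map_subtype_le B))
    rw [Submodule.map_injective_of_injective X.injective_subtype htop] at hBC
    exact eq_bot_of_isCompl_top hBC.symm
  refine ⟨not_subsingleton_iff_nontrivial.mp fun _ ↦ hXproj inferInstance, fun B C hBC ↦ ?_⟩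
  by_cases hB : Module.Projective A B
  · refine Or.inl (hsummand C B hBC.symm fun _ ↦ hXproj ?_)
    exact Module.Projective.of_equiv (Submodule.prodEquivOfIsCompl B C hBC)
  · exact Or.inr (hsummand B C hBC hB)

end Summands

namespace StableEndTrivial

variable {k : Type} [Field k] {A : Type} [Ring A] {M : Type} [AddCommGroup M] [Module k M]
  [Module A M] [SMulCommClass A k M]

theorem not_projective (hM : StableEndTrivial k A M) : ¬ Module.Projective A M :=
  fun h ↦ hM.1 (factorsThroughProjective_id_iff.mpr h)

theorem projective_or_projective_of_isCompl [SMul k A] [IsScalarTower k A M]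
    (hM : StableEndTrivial k A M) {X Y : Submodule A M} (hXY : IsCompl X Y) :
    Module.Projective A X ∨ Module.Projective A Y := by
  obtain ⟨a, ha⟩ := hM.2 (X.projection Y hXY)
  have he (x : M) : X.projection Y hXY (X.projection Y hXY x) = X.projection Y hXY x :=
    LinearMap.congr_fun (X.isIdempotentElem_projection hXY) x
  by_cases h1 : a = 1
  · have hY : Y.projection X hXY.symm ∘ₗ (X.projection Y hXY - a • LinearMap.id) =
        (-a) • Y.projection X hXY.symm := by
      rw [Submodule.projection_eq_id_sub_projection hXY]
      ext x
      simp only [LinearMap.sub_apply, LinearMap.comp_apply, LinearMap.smul_apply,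
        LinearMap.id_apply, map_sub, LinearMap.map_smul_of_tower, he]
      module
    refine Or.inr (Y.projective_of_factorsThroughProjective_projection hXY.symm ?_)
    exact FactorsThroughProjective.of_smul (c := -a) (by simp [h1]) (hY ▸ ha.comp_left _)
  · have hX : X.projection Y hXY ∘ₗ (X.projection Y hXY - a • LinearMap.id) =
        (1 - a) • X.projection Y hXY := by
      ext x
      simp [he, sub_smul]
    refine Or.inl (X.projective_of_factorsThroughProjective_projection hXY ?_)
    exact FactorsThroughProjective.of_smul (sub_ne_zero.mpr (Ne.symm h1)) (hX ▸ ha.comp_left _)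

end StableEndTrivial

theorem IndecomposableModule.nonempty_linearEquiv_of_prod_linearEquiv_prod {A : Type} [Ring A]
    {X Y W Q : Type} [AddCommGroup X] [Module A X] [AddCommGroup Y] [Module A Y]
    [AddCommGroup W] [Module A W] [AddCommGroup Q] [Module A Q] [IsNoetherian A X]
    [IsArtinian A X] [Module.Projective A Q] (hX : IndecomposableModule A X)
    (hXproj : ¬ Module.Projective A X) (hW : IndecomposableModule A W)
    (e : (X × Y) ≃ₗ[A] (W × Q)) : Nonempty (X ≃ₗ[A] W) := by
  let φ : X →ₗ[A] W := LinearMap.fst A W Q ∘ₗ e.toLinearMap ∘ₗ LinearMap.inl A X Y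
  let ψ : W →ₗ[A] X := LinearMap.fst A X Y ∘ₗ e.symm.toLinearMap ∘ₗ LinearMap.inl A W Q
  have hg : FactorsThroughProjective A (ψ ∘ₗ φ - LinearMap.id) := by
    refine ⟨Q, _, _, inferInstance, LinearMap.snd A W Q ∘ₗ e.toLinearMap ∘ₗ LinearMap.inl A X Y,
      -(LinearMap.fst A X Y ∘ₗ e.symm.toLinearMap ∘ₗ LinearMap.inr A W Q), ?_⟩
    ext x
    have hsplit : e.symm ((e (x, 0)).1, 0) + e.symm (0, (e (x, 0)).2) = (x, 0) := by
      rw [← map_add, Prod.mk_add_mk, add_zero, zero_add, e.symm_apply_apply]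
    have hfst := congrArg Prod.fst hsplit
    simp only [Prod.fst_add] at hfst
    simp only [LinearMap.sub_apply, LinearMap.coe_comp, LinearMap.coe_fst, LinearEquiv.coe_coe,
      LinearMap.coe_inl, Function.comp_apply, LinearMap.id_coe, id_eq, LinearMap.neg_comp,
      LinearMap.neg_apply, LinearMap.coe_inr, LinearMap.coe_snd, ψ, φ]
    rw [eq_neg_iff_add_eq_zero, sub_add_eq_add_sub, hfst, sub_self]
  let g := LinearEquiv.ofBijective (ψ ∘ₗ φ)
    (hX.bijective_of_factorsThroughProjective_sub_id hXproj hg)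
  have : Nontrivial X := hX.1
  have hleft : (g.symm.toLinearMap ∘ₗ ψ) ∘ₗ φ = LinearMap.id := LinearMap.ext g.symm_apply_apply
  exact ⟨LinearEquiv.ofBijective φ (hW.bijective_of_leftInverse hleft)⟩

theorem exists_unique_nonprojective_summand_general
    (k : Type) [Field k]
    (G : Type) [Group G]
    (V : Type) [AddCommGroup V] [Module k V] [Module (MonoidAlgebra k G) V]
    [IsScalarTower k (MonoidAlgebra k G) V] [SMulCommClass (MonoidAlgebra k G) k V]
    [Module.Finite k V]
    (hV : StableEndTrivial k (MonoidAlgebra k G) V) :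
    ∃ (V₀ : Type) (_ : AddCommGroup V₀) (_ : Module (MonoidAlgebra k G) V₀)
      (Q : Type) (_ : AddCommGroup Q) (_ : Module (MonoidAlgebra k G) Q),
      IndecomposableModule (MonoidAlgebra k G) V₀ ∧
      ¬ Module.Projective (MonoidAlgebra k G) V₀ ∧
      Module.Projective (MonoidAlgebra k G) Q ∧
      Nonempty (V ≃ₗ[MonoidAlgebra k G] (V₀ × Q)) ∧
      ∀ (W : Type) (_ : AddCommGroup W) (_ : Module (MonoidAlgebra k G) W),
        IndecomposableModule (MonoidAlgebra k G) W →
        ¬ Module.Projective (MonoidAlgebra k G) W →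
        (∃ (Q' : Type) (_ : AddCommGroup Q') (_ : Module (MonoidAlgebra k G) Q'),
          Module.Projective (MonoidAlgebra k G) Q' ∧
          Nonempty (V ≃ₗ[MonoidAlgebra k G] (W × Q'))) →
        Nonempty (W ≃ₗ[MonoidAlgebra k G] V₀) := by
  have : IsNoetherian (MonoidAlgebra k G) V := isNoetherian_of_tower k inferInstance
  have : IsArtinian (MonoidAlgebra k G) V := isArtinian_of_tower k inferInstance
  have htop : (⊤ : Submodule (MonoidAlgebra k G) V).IsNonprojectiveSummand :=
    ⟨⟨⊥, isCompl_top_bot⟩, fun _ ↦ hV.not_projective (.of_equiv Submodule.topEquiv)⟩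
  obtain ⟨X, hXmin⟩ := exists_minimal_of_wellFoundedLT _ ⟨_, htop⟩
  obtain ⟨⟨Y, hXY⟩, hXproj⟩ := hXmin.prop
  have hX := Submodule.indecomposableModule_of_minimal_isNonprojectiveSummand hXmin
  have hY := (hV.projective_or_projective_of_isCompl hXY).resolve_left hXproj
  let e := (Submodule.prodEquivOfIsCompl X Y hXY).symm
  refine ⟨X, _, _, Y, _, _, hX, hXproj, hY, ⟨e⟩, ?_⟩
  rintro W _ _ hW - ⟨Q, _, _, hQ, ⟨e'⟩⟩
  exact (hX.nonempty_linearEquiv_of_prod_linearEquiv_prod hXproj hW (e.symm.trans e')).map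
    LinearEquiv.symm

/-- If the stable endomorphism ring of the finite-dimensional `kG`-module `V` is
isomorphic to `k`, then `V` has a unique (up to isomorphism) non-projective indecomposable
direct summand `V₀`, and `V ≅ V₀ ⊕ Q` with `Q` projective. -/
theorem exists_unique_nonprojective_summand
    (p : ℕ) [Fact p.Prime] (k : Type) [Field k] [CharP k p]
    (G : Type) [Group G] [Fintype G]
    (V : Type) [AddCommGroup V] [Module k V] [Module (MonoidAlgebra k G) V]
    [IsScalarTower k (MonoidAlgebra k G) V] [SMulCommClass (MonoidAlgebra k G) k V]
    [Module.Finite k V]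
    (hV : StableEndTrivial k (MonoidAlgebra k G) V) :
    ∃ (V₀ : Type) (_ : AddCommGroup V₀) (_ : Module (MonoidAlgebra k G) V₀)
      (Q : Type) (_ : AddCommGroup Q) (_ : Module (MonoidAlgebra k G) Q),
      IndecomposableModule (MonoidAlgebra k G) V₀ ∧
      ¬ Module.Projective (MonoidAlgebra k G) V₀ ∧
      Module.Projective (MonoidAlgebra k G) Q ∧
      Nonempty (V ≃ₗ[MonoidAlgebra k G] (V₀ × Q)) ∧
      ∀ (W : Type) (_ : AddCommGroup W) (_ : Module (MonoidAlgebra k G) W),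
        IndecomposableModule (MonoidAlgebra k G) W →
        ¬ Module.Projective (MonoidAlgebra k G) W →
        (∃ (Q' : Type) (_ : AddCommGroup Q') (_ : Module (MonoidAlgebra k G) Q'),
          Module.Projective (MonoidAlgebra k G) Q' ∧
          Nonempty (V ≃ₗ[MonoidAlgebra k G] (W × Q'))) →
        Nonempty (W ≃ₗ[MonoidAlgebra k G] V₀) :=
  exists_unique_nonprojective_summand_general k G V hV
end
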